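/- If a canonical calculus G is coherent, then the Nmatrix M_G is well-defined: there is no quantifier Q, sign s, and set E ∈ P⁺({t,f}ⁿ) such that two dual rules Θ₁/⇒A and Θ₂/A⇒ of G both have their premise sets valid in some E-canonical L^n_k-structure (k ∈ {0,1}). -/

import Mathlib

open Classical

noncomputable section

/-! A first-order language with `(n,k)`-ary quantifiers. -/

/-- A signature: function symbols, predicate symbols, and `(n,k)`-ary
quantifiers (`qn Q = n` formulas connected, `qk Q = k` variables bound). -/
structure Sig where
  Func : Type
  farity : Func → ℕ
  Pred : Type
  parity : Pred → ℕ
  Quant : Type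
  qn : Quant → ℕ
  qk : Quant → ℕ

/-- Terms of `L(D)`: the language extended with an individual constant for
each element of `D` (take `D := Empty` for the base language `L`). -/
inductive Tm (σ : Sig) (D : Type) where
  | var : ℕ → Tm σ D
  | func : (f : σ.Func) → (Fin (σ.farity f) → Tm σ D) → Tm σ D
  | dconst : D → Tm σ D

/-- Formulas of `L(D)`: atomic formulas and `(n,k)`-ary quantified formulas
`Q x₁…x_k (ψ₁,…,ψₙ)`. -/
inductive Fm (σ : Sig) (D : Type) where
  | atom : (p : σ.Pred) → (Fin (σ.parity p) → Tm σ D) → Fm σ D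
  | quant : (q : σ.Quant) → (Fin (σ.qk q) → ℕ) → (Fin (σ.qn q) → Fm σ D) → Fm σ D

variable {σ : Sig} {D : Type}

namespace Tm

/-- The variables occurring in a term. -/
def vars : Tm σ D → Set ℕ
  | .var n => {n}
  | .func _ ts => ⋃ i, (ts i).vars
  | .dconst _ => ∅

/-- Simultaneous substitution of terms for variables in a term. -/
def subst (s : ℕ → Tm σ D) : Tm σ D → Tm σ D
  | .var n => s n
  | .func f ts => .func f (fun i => (ts i).subst s)
  | .dconst a => .dconst a

end Tm

namespace Fm

/-- The free variables of a formula. -/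
def fv : Fm σ D → Set ℕ
  | .atom _ ts => ⋃ i, (ts i).vars
  | .quant _ xs ψ => (⋃ i, (ψ i).fv) \ Set.range xs

/-- The bound variables of a formula. -/
def bv : Fm σ D → Set ℕ
  | .atom _ _ => ∅
  | .quant _ xs ψ => Set.range xs ∪ ⋃ i, (ψ i).bv

/-- All variables occurring (free or bound) in a formula. -/
def allVars : Fm σ D → Set ℕ
  | .atom _ ts => ⋃ i, (ts i).vars
  | .quant _ xs ψ => Set.range xs ∪ ⋃ i, (ψ i).allVars

/-- Simultaneous substitution of terms for the free variables of a formula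
(bound variables are left untouched). -/
def subst (s : ℕ → Tm σ D) : Fm σ D → Fm σ D
  | .atom p ts => .atom p (fun i => (ts i).subst s)
  | .quant q xs ψ =>
      .quant q xs (fun i => (ψ i).subst (fun n => if ∃ j, xs j = n then .var n else s n))

end Fm

/-- The renaming substitution `{z₁/x₁, …, z_k/x_k}`. -/
def renVar {k : ℕ} (xs zs : Fin k → ℕ) : ℕ → Tm σ D := fun n =>
  if h : ∃ j, xs j = n then .var (zs (Classical.choose h)) else .var n

/-- `α`-equivalence: identity up to renaming of bound variables. Two
quantified formulas are `α`-equivalent when, for fresh distinct variables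
`z₁,…,z_k`, the corresponding bodies with the bound variables renamed to the
`zᵢ` are `α`-equivalent. -/
inductive AlphaEq : Fm σ D → Fm σ D → Prop
  | atom (p : σ.Pred) (ts : Fin (σ.parity p) → Tm σ D) : AlphaEq (.atom p ts) (.atom p ts)
  | quant (q : σ.Quant) (xs ys : Fin (σ.qk q) → ℕ)
      (ψ φ : Fin (σ.qn q) → Fm σ D) (zs : Fin (σ.qk q) → ℕ)
      (hinj : Function.Injective zs)
      (hfresh : ∀ j, zs j ∉ (Fm.quant q xs ψ).allVars ∪ (Fm.quant q ys φ).allVars)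
      (h : ∀ i, AlphaEq ((ψ i).subst (renVar xs zs)) ((φ i).subst (renVar ys zs))) :
      AlphaEq (.quant q xs ψ) (.quant q ys φ)

/-! Structures and the congruence relation `∼^S`. -/

/-- An `L`-structure: a nonempty domain with interpretations of function and
predicate symbols (two-valued predicates). -/
structure Struc (σ : Sig) where
  D : Type
  ne : Nonempty D
  funcI : (f : σ.Func) → (Fin (σ.farity f) → D) → D
  predI : (p : σ.Pred) → (Fin (σ.parity p) → D) → Bool

/-- Evaluation of a term of `L(D)` in `S` under an assignment. -/
def Tm.eval (S : Struc σ) (v : ℕ → S.D) : Tm σ S.D → S.D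
  | .var n => v n
  | .func f ts => S.funcI f (fun i => (ts i).eval S v)
  | .dconst a => a

/-- The congruence `∼^S` on terms of `L(D)`: reflexivity on variables, closed
terms with the same value are related, and compatibility with function
symbols. -/
inductive TmEq (S : Struc σ) : Tm σ S.D → Tm σ S.D → Prop
  | var (n : ℕ) : TmEq S (.var n) (.var n)
  | closed {t t' : Tm σ S.D} : t.vars = ∅ → t'.vars = ∅ →
      (∀ v, t.eval S v = t'.eval S v) → TmEq S t t'
  | func (f : σ.Func) (ts ts' : Fin (σ.farity f) → Tm σ S.D) :
      (∀ i, TmEq S (ts i) (ts' i)) → TmEq S (.func f ts) (.func f ts')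

/-- The congruence `∼^S` on formulas of `L(D)`. -/
inductive FmEq (S : Struc σ) : Fm σ S.D → Fm σ S.D → Prop
  | atom (p : σ.Pred) (ts ts' : Fin (σ.parity p) → Tm σ S.D) :
      (∀ i, TmEq S (ts i) (ts' i)) → FmEq S (.atom p ts) (.atom p ts')
  | quant (q : σ.Quant) (xs ys : Fin (σ.qk q) → ℕ)
      (ψ φ : Fin (σ.qn q) → Fm σ S.D) (zs : Fin (σ.qk q) → ℕ)
      (hinj : Function.Injective zs)
      (hfresh : ∀ j, zs j ∉ (Fm.quant q xs ψ).allVars ∪ (Fm.quant q ys φ).allVars)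
      (h : ∀ i, FmEq S ((ψ i).subst (renVar xs zs)) ((φ i).subst (renVar ys zs))) :
      FmEq S (.quant q xs ψ) (.quant q ys φ)

/-! Canonical rules: clauses over the simplified language `L^n_k(Con)`
(`n` `k`-ary predicate symbols `p₁,…,pₙ`, constants, no function symbols). -/

/-- Terms of the simplified language: (schematic) variables and constants,
both numbered. -/
inductive RTm where
  | rvar : ℕ → RTm
  | rconst : ℕ → RTm
deriving DecidableEq

/-- Atomic formulas `pᵢ(t₁,…,t_k)` of `L^n_k(Con)`. -/
structure RAtom (n k : ℕ) where
  idx : Fin n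
  args : Fin k → RTm

/-- A clause over `L^n_k(Con)`. -/
structure RClause (n k : ℕ) where
  ant : List (RAtom n k)
  suc : List (RAtom n k)

def RClause.atoms {n k : ℕ} (cl : RClause n k) : List (RAtom n k) := cl.ant ++ cl.suc

/-- A canonical `(n,k)`-ary rule `Θ/Q(s)` for the quantifier `q`; `side = true`
means a right-introduction rule `Θ/⇒ Q v⃗ (p₁(v⃗),…,pₙ(v⃗))`, `side = false`
a left-introduction rule. -/
structure Rule (σ : Sig) where
  q : σ.Quant
  side : Bool
  prem : List (RClause (σ.qn q) (σ.qk q))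

/-- A canonical calculus: a finite list of canonical rules. -/
abbrev CanCalc (σ : Sig) := List (Rule σ)

/-- Variables occurring in a set of rule-clauses. -/
def ruleVars {n k : ℕ} (Θ : List (RClause n k)) : Set ℕ :=
  {x | ∃ cl ∈ Θ, ∃ a ∈ cl.atoms, ∃ j, a.args j = RTm.rvar x}

/-- Constants occurring in a set of rule-clauses. -/
def ruleConsts {n k : ℕ} (Θ : List (RClause n k)) : Set ℕ :=
  {c | ∃ cl ∈ Θ, ∃ a ∈ cl.atoms, ∃ j, a.args j = RTm.rconst c}

/-- Semantics of rule-clauses in a structure for `L^n_k(Con)`. -/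
def RAtom.evalR {n k : ℕ} {D : Type} (cI : ℕ → D) (pI : Fin n → (Fin k → D) → Bool)
    (v : ℕ → D) (a : RAtom n k) : Bool :=
  pI a.idx (fun j => match a.args j with
    | .rvar x => v x
    | .rconst c => cI c)

def RClause.trueIn {n k : ℕ} {D : Type} (cI : ℕ → D) (pI : Fin n → (Fin k → D) → Bool)
    (v : ℕ → D) (cl : RClause n k) : Prop :=
  (∃ a ∈ cl.ant, a.evalR cI pI v = false) ∨ (∃ a ∈ cl.suc, a.evalR cI pI v = true)

/-- Validity of a set of rule-clauses in a structure (truth under all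
assignments). -/
def RValidIn {n k : ℕ} (D : Type) (cI : ℕ → D) (pI : Fin n → (Fin k → D) → Bool)
    (Θ : List (RClause n k)) : Prop :=
  ∀ v : ℕ → D, ∀ cl ∈ Θ, cl.trueIn cI pI v

/-- Classical consistency of a set of rule-clauses. -/
def RConsistent {n k : ℕ} (Θ : List (RClause n k)) : Prop :=
  ∃ (D : Type) (_ : Nonempty D) (cI : ℕ → D) (pI : Fin n → (Fin k → D) → Bool) (v : ℕ → D),
    ∀ cl ∈ Θ, cl.trueIn cI pI v

/-- Renaming of variables and constants in rule-clauses. -/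
def RTm.ren (rv rc : ℕ → ℕ) : RTm → RTm
  | .rvar x => .rvar (rv x)
  | .rconst c => .rconst (rc c)

def RAtom.ren {n k : ℕ} (rv rc : ℕ → ℕ) (a : RAtom n k) : RAtom n k :=
  ⟨a.idx, fun j => (a.args j).ren rv rc⟩

def RClause.ren {n k : ℕ} (rv rc : ℕ → ℕ) (cl : RClause n k) : RClause n k :=
  ⟨cl.ant.map (RAtom.ren rv rc), cl.suc.map (RAtom.ren rv rc)⟩

def renClauses {n k : ℕ} (rv rc : ℕ → ℕ) (Θ : List (RClause n k)) : List (RClause n k) :=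
  Θ.map (RClause.ren rv rc)

/-- A renaming suitable for forming `Rnm(Θ₁ ∪ Θ₂)`: variables and constants of
`Θ₂` clashing with `Θ₁` are renamed injectively to fresh ones, the others
are kept. -/
def GoodRen {n k : ℕ} (Θ₁ Θ₂ : List (RClause n k)) (rv rc : ℕ → ℕ) : Prop :=
  Function.Injective rv ∧ Function.Injective rc ∧
  (∀ x ∈ ruleVars Θ₂,
    (x ∈ ruleVars Θ₁ → rv x ∉ ruleVars Θ₁ ∪ ruleVars Θ₂) ∧
    (x ∉ ruleVars Θ₁ → rv x = x)) ∧
  (∀ c ∈ ruleConsts Θ₂,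
    (c ∈ ruleConsts Θ₁ → rc c ∉ ruleConsts Θ₁ ∪ ruleConsts Θ₂) ∧
    (c ∉ ruleConsts Θ₁ → rc c = c))

/-- **Coherence** of a canonical calculus: for every two dual rules
`Θ₁/⇒A` and `Θ₂/A⇒`, the set `Rnm(Θ₁ ∪ Θ₂)` is classically inconsistent. -/
def Coherent {σ : Sig} (G : CanCalc σ) : Prop :=
  ∀ (q : σ.Quant) (Θ₁ Θ₂ : List (RClause (σ.qn q) (σ.qk q))),
    Rule.mk q true Θ₁ ∈ G → Rule.mk q false Θ₂ ∈ G →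
    ∀ rv rc, GoodRen Θ₁ Θ₂ rv rc → ¬ RConsistent (Θ₁ ++ renClauses rv rc Θ₂)

/-! Two-valued non-deterministic matrices and their semantics. -/

/-- A 2Nmatrix: truth values `Bool` with `true` designated; each `(n,k)`-ary
quantifier gets a distribution function `Q̃ : P⁺({t,f}ⁿ) → P⁺({t,f})`. -/
structure NMatrix (σ : Sig) where
  qI : (q : σ.Quant) → Set (Fin (σ.qn q) → Bool) → Set Bool
  ne : ∀ q E, E.Nonempty → (qI q E).Nonempty

/-- The substitution `{ā₁/x₁, …, ā_k/x_k}` of individual constants for the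
bound variables. -/
def dsubst {k : ℕ} {D : Type} (xs : Fin k → ℕ) (as : Fin k → D) : ℕ → Tm σ D := fun n =>
  if h : ∃ j, xs j = n then .dconst (as (Classical.choose h)) else .var n

/-- An `M`-legal `S`-valuation: a two-valued valuation of the sentences of
`L(D)` respecting `∼^S`, the interpretation of atomic sentences, and the
distribution functions of the quantifiers. -/
structure LegalVal {σ : Sig} (M : NMatrix σ) (S : Struc σ) where
  v : Fm σ S.D → Bool
  respects : ∀ ψ ψ' : Fm σ S.D, ψ.fv = ∅ → ψ'.fv = ∅ → FmEq S ψ ψ' → v ψ = v ψ'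
  atoms : ∀ (p : σ.Pred) (ts : Fin (σ.parity p) → Tm σ S.D) (w : ℕ → S.D),
    (Fm.atom p ts).fv = ∅ →
    v (.atom p ts) = S.predI p (fun i => (ts i).eval S w)
  quants : ∀ (q : σ.Quant) (xs : Fin (σ.qk q) → ℕ) (ψ : Fin (σ.qn q) → Fm σ S.D),
    (Fm.quant q xs ψ).fv = ∅ →
    v (.quant q xs ψ) ∈
      M.qI q {tp | ∃ as : Fin (σ.qk q) → S.D, tp = fun i => v ((ψ i).subst (dsubst xs as))}

/-- Embedding of `L`-terms into `L(D)`-terms. -/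
def Tm.emb {σ : Sig} {D : Type} : Tm σ Empty → Tm σ D
  | .var n => .var n
  | .func f ts => .func f (fun i => (ts i).emb)
  | .dconst a => a.elim

/-- Embedding of `L`-formulas into `L(D)`-formulas. -/
def Fm.emb {σ : Sig} {D : Type} : Fm σ Empty → Fm σ D
  | .atom p ts => .atom p (fun i => (ts i).emb)
  | .quant q xs ψ => .quant q xs (fun i => (ψ i).emb)

/-- Sequents over the language `L` (sets of formulas, as in the paper). -/
structure Sqnt (σ : Sig) where
  ant : Set (Fm σ Empty)
  suc : Set (Fm σ Empty)

/-- An `S`-substitution: an assignment of closed `L(D)`-terms to variables. -/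
def ClosedSub {σ : Sig} (S : Struc σ) (s : ℕ → Tm σ S.D) : Prop :=
  ∀ n, (s n).vars = ∅

/-- `σ[ψ]` : the closed instance of an `L`-formula under an `S`-substitution. -/
def applySub {σ : Sig} (S : Struc σ) (s : ℕ → Tm σ S.D) (A : Fm σ Empty) : Fm σ S.D :=
  (Fm.emb A).subst s

/-- `M`-validity of a sequent in `⟨S, v⟩`. -/
def SeqValid {σ : Sig} (M : NMatrix σ) (S : Struc σ) (V : LegalVal M S) (sq : Sqnt σ) : Prop :=
  ∀ s : ℕ → Tm σ S.D, ClosedSub S s →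
    (∀ A ∈ sq.ant, V.v (applySub S s A) = true) → ∃ B ∈ sq.suc, V.v (applySub S s B) = true

/-- The semantic consequence relation `S ⊢_M Γ⇒Δ`. -/
def Models {σ : Sig} (M : NMatrix σ) (Hyp : Set (Sqnt σ)) (sq : Sqnt σ) : Prop :=
  ∀ (S : Struc σ) (V : LegalVal M S),
    (∀ h ∈ Hyp, SeqValid M S V h) → SeqValid M S V sq

/-! The proof system of a canonical calculus. -/

/-- `t` is free for `x` in `ψ`. -/
def FreeFor {σ : Sig} {D : Type} (t : Tm σ D) (x : ℕ) : Fm σ D → Prop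
  | .atom _ _ => True
  | .quant q xs ψ =>
      (∃ j, xs j = x) ∨ x ∉ (Fm.quant q xs ψ).fv ∨
        ((∀ j, xs j ∉ t.vars) ∧ ∀ i, FreeFor t x (ψ i))

/-- An instantiation (`χ`-mapping) of the schematic language `L^n_k(Con)`
into `L`: formulas for the predicate symbols, `L`-variables for the schematic
variables (eigenvariables), `L`-terms for the constants. -/
structure ChiMap (σ : Sig) (n : ℕ) where
  fp : Fin n → Fm σ Empty
  fvv : ℕ → ℕ
  fc : ℕ → Tm σ Empty

/-- The `L`-term instantiating a schematic term. -/
def ChiMap.tm {σ : Sig} {n : ℕ} (χ : ChiMap σ n) : RTm → Tm σ Empty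
  | .rvar x => .var (χ.fvv x)
  | .rconst c => χ.fc c

/-- `χ[pᵢ(t₁,…,t_k)] = χ[pᵢ]{χ[t₁]/z₁, …, χ[t_k]/z_k}`. -/
def ChiMap.atomFm {σ : Sig} {n k : ℕ} (χ : ChiMap σ n) (zs : Fin k → ℕ)
    (a : RAtom n k) : Fm σ Empty :=
  (χ.fp a.idx).subst
    (fun m => if h : ∃ j, zs j = m then χ.tm (a.args (Classical.choose h)) else .var m)

def ChiMap.fmSet {σ : Sig} {n k : ℕ} (χ : ChiMap σ n) (zs : Fin k → ℕ)
    (l : List (RAtom n k)) : Set (Fm σ Empty) :=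
  {A | ∃ a ∈ l, A = χ.atomFm zs a}

/-- The formula `Q z₁…z_k (χ[p₁],…,χ[pₙ])` introduced by an application. -/
def concFm {σ : Sig} (q : σ.Quant) (zs : Fin (σ.qk q) → ℕ) (χ : ChiMap σ (σ.qn q)) :
    Fm σ Empty :=
  .quant q zs (fun i => χ.fp i)

/-- The side conditions of a `⟨R,Γ∪Δ,z₁,…,z_k⟩`-mapping. -/
def ChiOK {σ : Sig} (R : Rule σ) (χ : ChiMap σ (σ.qn R.q)) (zs : Fin (σ.qk R.q) → ℕ)
    (Γ Δ : Set (Fm σ Empty)) : Prop :=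
  Function.Injective zs ∧
  Function.Injective χ.fvv ∧
  (∀ c x, x ∈ ruleVars R.prem → χ.fvv x ∉ (χ.fc c).vars) ∧
  (∀ cl ∈ R.prem, ∀ a ∈ cl.atoms, ∀ j,
    FreeFor (χ.tm (a.args j)) (zs j) (χ.fp a.idx) ∧
    (∀ x, a.args j = RTm.rvar x →
      χ.fvv x ∉ (⋃ A ∈ Γ ∪ Δ, Fm.fv A) ∪ (concFm R.q zs χ).fv))

/-- Derivations in a canonical calculus `G` from hypotheses `Hyp`, with cuts
allowed only on formulas from `Cut`: the `α`-axioms, weakening, cut, and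
applications of the canonical rules of `G`. -/
inductive Deriv {σ : Sig} (G : CanCalc σ) (Hyp : Set (Sqnt σ)) (Cut : Set (Fm σ Empty)) :
    Sqnt σ → Prop
  | hyp {s : Sqnt σ} : s ∈ Hyp → Deriv G Hyp Cut s
  | ax {A A' : Fm σ Empty} : AlphaEq A A' → Deriv G Hyp Cut ⟨{A}, {A'}⟩
  | weaken {Γ Δ Γ' Δ' : Set (Fm σ Empty)} :
      Deriv G Hyp Cut ⟨Γ, Δ⟩ → Γ ⊆ Γ' → Δ ⊆ Δ' → Deriv G Hyp Cut ⟨Γ', Δ'⟩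
  | cut {A : Fm σ Empty} {Γ Δ : Set (Fm σ Empty)} : A ∈ Cut →
      Deriv G Hyp Cut ⟨Γ, insert A Δ⟩ → Deriv G Hyp Cut ⟨insert A Γ, Δ⟩ →
      Deriv G Hyp Cut ⟨Γ, Δ⟩
  | app {R : Rule σ} (hR : R ∈ G) (χ : ChiMap σ (σ.qn R.q)) (zs : Fin (σ.qk R.q) → ℕ)
      (Γ Δ : Set (Fm σ Empty)) (hok : ChiOK R χ zs Γ Δ)
      (hprem : ∀ cl ∈ R.prem,
        Deriv G Hyp Cut ⟨Γ ∪ χ.fmSet zs cl.ant, Δ ∪ χ.fmSet zs cl.suc⟩) :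
      Deriv G Hyp Cut
        (cond R.side ⟨Γ, insert (concFm R.q zs χ) Δ⟩ ⟨insert (concFm R.q zs χ) Γ, Δ⟩)

/-- Derivability (arbitrary cuts allowed). -/
def Derives {σ : Sig} (G : CanCalc σ) (Hyp : Set (Sqnt σ)) (sq : Sqnt σ) : Prop :=
  Deriv G Hyp Set.univ sq

/-- The formulas occurring in a set of sequents. -/
def hypFmlas {σ : Sig} (Hyp : Set (Sqnt σ)) : Set (Fm σ Empty) :=
  ⋃ s ∈ Hyp, s.ant ∪ s.suc

/-- A simple proof from `Hyp` : all cuts are on formulas from `Hyp`. -/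
def SimpleProof {σ : Sig} (G : CanCalc σ) (Hyp : Set (Sqnt σ)) (sq : Sqnt σ) : Prop :=
  Deriv G Hyp (hypFmlas Hyp) sq

/-- Applying an `L`-substitution to a sequent. -/
def Sqnt.substS {σ : Sig} (s : ℕ → Tm σ Empty) (sq : Sqnt σ) : Sqnt σ :=
  ⟨Fm.subst s '' sq.ant, Fm.subst s '' sq.suc⟩

/-- A set of sequents closed under substitution. -/
def SubstClosed {σ : Sig} (Hyp : Set (Sqnt σ)) : Prop :=
  ∀ sq ∈ Hyp, ∀ s : ℕ → Tm σ Empty, Sqnt.substS s sq ∈ Hyp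

/-- The free-variable condition for a set of sequents: variables occurring
bound are disjoint from variables occurring free. -/
def FVCond {σ : Sig} (T : Set (Sqnt σ)) : Prop :=
  (⋃ sq ∈ T, ⋃ A ∈ sq.ant ∪ sq.suc, Fm.bv A) ∩
  (⋃ sq ∈ T, ⋃ A ∈ sq.ant ∪ sq.suc, Fm.fv A) = ∅

/-- `M` is a strongly characteristic 2Nmatrix for `G`. -/
def StronglyChar {σ : Sig} (M : NMatrix σ) (G : CanCalc σ) : Prop :=
  ∀ Hyp : Set (Sqnt σ), SubstClosed Hyp → ∀ sq, Derives G Hyp sq ↔ Models M Hyp sq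

/-- `G` admits strong cut-elimination. -/
def StrongCutElim {σ : Sig} (G : CanCalc σ) : Prop :=
  ∀ Hyp : Set (Sqnt σ), SubstClosed Hyp → ∀ sq : Sqnt σ, FVCond (insert sq Hyp) →
    Derives G Hyp sq → SimpleProof G Hyp sq

/-- All quantifiers used in `G` are `(n,k)`-ary with `k ∈ {0,1}`. -/
def KAtMostOne {σ : Sig} (G : CanCalc σ) : Prop :=
  ∀ R ∈ G, σ.qk R.q = 0 ∨ σ.qk R.q = 1

/-- Validity of a set of rule-clauses over `L^n_0` in the `E`-canonical
structure (only defined when `E` is the singleton of the distribution). -/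
def ECanValid0 {n : ℕ} (E : Set (Fin n → Bool)) (Θ : List (RClause n 0)) : Prop :=
  ∃ s : Fin n → Bool, E = {s} ∧
    RValidIn PUnit (fun _ => PUnit.unit) (fun i _ => s i) Θ

/-- Validity of a set of rule-clauses over `L^n_1` in some `E`-canonical
structure: the domain is `E` itself and `I[pᵢ][⟨s₁,…,sₙ⟩] = sᵢ`; such
structures differ only in the interpretation of constants. -/
def ECanValid1 {n : ℕ} (E : Set (Fin n → Bool)) (Θ : List (RClause n 1)) : Prop :=
  ∃ cI : ℕ → {t // t ∈ E},
    RValidIn {t // t ∈ E} cI (fun i b => (b 0).val i) Θ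

/-- Validity in some `E`-canonical structure, for `k ∈ {0,1}`. -/
def ECanValid {n k : ℕ} (E : Set (Fin n → Bool)) (Θ : List (RClause n k)) : Prop :=
  (∃ h : k = 0, ECanValid0 E (h ▸ Θ)) ∨ (∃ h : k = 1, ECanValid1 E (h ▸ Θ))

/-! The `E`-canonical structures in which `Θ₁` and `Θ₂` are valid share their domain and the
interpretation of the predicate symbols, and differ only in how they interpret constants. Once
the constants of `Θ₂` are renamed apart from those of `Θ₁`, one interpretation of constants
(glued with `Function.extend`) agrees with both, so `Θ₁ ∪ Rnm(Θ₂)` is satisfiable, against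
coherence. A renaming of the required kind always exists because rules mention only finitely
many variables and constants: shift the clashing ones above all of them. -/

section Renaming

theorem Function.exists_eqOn_and_eqOn_comp {α β γ : Type*} {f : α → β}
    (hf : Function.Injective f) (g₁ : β → γ) (g₂ : α → γ) {s₁ : Set β} {s₂ : Set α}
    (hdisj : ∀ a ∈ s₂, f a ∉ s₁) :
    ∃ g : β → γ, Set.EqOn g g₁ s₁ ∧ Set.EqOn (g ∘ f) g₂ s₂ := by
  refine ⟨Function.extend f (fun a => if a ∈ s₂ then g₂ a else g₁ (f a)) g₁, ?_, ?_⟩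
  · intro b hb
    by_cases hrange : ∃ a, f a = b
    · obtain ⟨a, rfl⟩ := hrange
      have ha : a ∉ s₂ := fun ha => hdisj a ha hb
      simp only [hf.extend_apply, if_neg ha]
    · exact Function.extend_apply' _ _ _ hrange
  · intro a ha
    simp only [Function.comp_apply, hf.extend_apply, if_pos ha]

def shiftAway (N : ℕ) (A : Set ℕ) (x : ℕ) : ℕ :=
  if x < N ∧ x ∉ A then x else x + N

theorem shiftAway_injective (N : ℕ) (A : Set ℕ) : Function.Injective (shiftAway N A) := by
  intro x y h
  unfold shiftAway at h
  split_ifs at h with hx hy hy <;> omega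

theorem shiftAway_spec {N : ℕ} {A B : Set ℕ} (hA : ∀ x ∈ A, x < N) (hB : ∀ x ∈ B, x < N) :
    ∀ x ∈ B, (x ∈ A → shiftAway N A x ∉ A ∪ B) ∧ (x ∉ A → shiftAway N A x = x) := by
  intro x hxB
  refine ⟨fun hxA hmem => ?_, fun hxA => if_pos ⟨hB x hxB, hxA⟩⟩
  have hshift : shiftAway N A x = x + N := if_neg fun h => h.2 hxA
  have := hshift ▸ hmem.elim (hA _) (hB _)
  omega

end Renaming

section RuleSyntax

variable {n k : ℕ}

def ruleTerms (Θ : List (RClause n k)) : List RTm :=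
  Θ.flatMap fun cl => cl.atoms.flatMap fun a => List.ofFn a.args

theorem mem_ruleTerms {Θ : List (RClause n k)} {t : RTm} :
    t ∈ ruleTerms Θ ↔ ∃ cl ∈ Θ, ∃ a ∈ cl.atoms, ∃ j, a.args j = t := by
  simp [ruleTerms, List.mem_ofFn]

theorem ruleVars_finite (Θ : List (RClause n k)) : (ruleVars Θ).Finite := by
  refine ((ruleTerms Θ).finite_toSet.preimage (f := RTm.rvar) ?_).subset ?_
  · exact fun _ _ _ _ h => RTm.rvar.inj h
  · exact fun x hx => mem_ruleTerms.mpr hx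

theorem ruleConsts_finite (Θ : List (RClause n k)) : (ruleConsts Θ).Finite := by
  refine ((ruleTerms Θ).finite_toSet.preimage (f := RTm.rconst) ?_).subset ?_
  · exact fun _ _ _ _ h => RTm.rconst.inj h
  · exact fun x hx => mem_ruleTerms.mpr hx

theorem exists_goodRen (Θ₁ Θ₂ : List (RClause n k)) : ∃ rv rc, GoodRen Θ₁ Θ₂ rv rc := by
  obtain ⟨M, hM⟩ := ((((ruleVars_finite Θ₁).union (ruleVars_finite Θ₂)).union
    ((ruleConsts_finite Θ₁).union (ruleConsts_finite Θ₂)))).bddAbove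
  have hlt : ∀ x ∈ (ruleVars Θ₁ ∪ ruleVars Θ₂) ∪ (ruleConsts Θ₁ ∪ ruleConsts Θ₂), x < M + 1 :=
    fun x hx => Nat.lt_succ_of_le (hM hx)
  refine ⟨shiftAway (M + 1) (ruleVars Θ₁), shiftAway (M + 1) (ruleConsts Θ₁),
    shiftAway_injective _ _, shiftAway_injective _ _, ?_, ?_⟩ <;>
  exact shiftAway_spec (fun x hx => hlt x (by simp [hx])) (fun x hx => hlt x (by simp [hx]))

theorem GoodRen.rc_not_mem_ruleConsts {Θ₁ Θ₂ : List (RClause n k)} {rv rc : ℕ → ℕ}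
    (h : GoodRen Θ₁ Θ₂ rv rc) : ∀ c ∈ ruleConsts Θ₂, rc c ∉ ruleConsts Θ₁ := by
  intro c hc
  by_cases hc₁ : c ∈ ruleConsts Θ₁
  · exact fun hmem => (h.2.2.2 c hc).1 hc₁ (Or.inl hmem)
  · rwa [(h.2.2.2 c hc).2 hc₁]

end RuleSyntax

section RuleSemantics

variable {n k : ℕ} {cI cI' : ℕ → D} {pI : Fin n → (Fin k → D) → Bool} {v : ℕ → D}

theorem RAtom.evalR_ren (rv rc : ℕ → ℕ) (a : RAtom n k) :
    (a.ren rv rc).evalR cI pI v = a.evalR (cI ∘ rc) pI (v ∘ rv) := by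
  unfold RAtom.evalR RAtom.ren
  congr 1
  funext j
  cases h : a.args j <;> simp [h, RTm.ren]

theorem RAtom.evalR_congr_consts {a : RAtom n k}
    (hc : ∀ j c, a.args j = RTm.rconst c → cI c = cI' c) :
    a.evalR cI pI v = a.evalR cI' pI v := by
  unfold RAtom.evalR
  congr 1
  funext j
  cases h : a.args j with
  | rvar x => rfl
  | rconst c => exact hc j c h

theorem RClause.trueIn_ren (rv rc : ℕ → ℕ) (cl : RClause n k) :
    (cl.ren rv rc).trueIn cI pI v ↔ cl.trueIn (cI ∘ rc) pI (v ∘ rv) := by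
  simp [RClause.trueIn, RClause.ren, RAtom.evalR_ren]

theorem RClause.trueIn_congr_consts {cl : RClause n k}
    (hc : ∀ a ∈ cl.atoms, ∀ j c, a.args j = RTm.rconst c → cI c = cI' c) :
    cl.trueIn cI pI v ↔ cl.trueIn cI' pI v := by
  have heval (a) (ha : a ∈ cl.atoms) := RAtom.evalR_congr_consts (pI := pI) (v := v) (hc a ha)
  unfold RClause.trueIn
  refine or_congr ?_ ?_ <;> refine exists_congr fun a => and_congr_right fun ha => ?_
  · rw [heval a (List.mem_append_left _ ha)]
  · rw [heval a (List.mem_append_right _ ha)]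

theorem RValidIn.congr_consts {Θ : List (RClause n k)} (h : RValidIn D cI pI Θ)
    (hc : Set.EqOn cI' cI (ruleConsts Θ)) : RValidIn D cI' pI Θ := fun v cl hcl =>
  (RClause.trueIn_congr_consts fun a ha j _ hj => hc ⟨cl, hcl, a, ha, j, hj⟩).mpr (h v cl hcl)

theorem RValidIn.renClauses {Θ : List (RClause n k)} {rv rc : ℕ → ℕ}
    (h : RValidIn D (cI ∘ rc) pI Θ) : RValidIn D cI pI (renClauses rv rc Θ) := by
  intro v cl hcl
  obtain ⟨cl₀, hcl₀, rfl⟩ := List.mem_map.mp hcl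
  exact (RClause.trueIn_ren rv rc cl₀).mpr (h (v ∘ rv) cl₀ hcl₀)

theorem RValidIn.append {Θ₁ Θ₂ : List (RClause n k)} (h₁ : RValidIn D cI pI Θ₁)
    (h₂ : RValidIn D cI pI Θ₂) : RValidIn D cI pI (Θ₁ ++ Θ₂) := fun v cl hcl =>
  (List.mem_append.mp hcl).elim (h₁ v cl) (h₂ v cl)

theorem RValidIn.rConsistent [Nonempty D] {Θ : List (RClause n k)}
    (h : RValidIn D cI pI Θ) : RConsistent Θ :=
  ⟨D, inferInstance, cI, pI, Classical.arbitrary _, h _⟩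

theorem rConsistent_append_renClauses [Nonempty D] {cI₁ cI₂ : ℕ → D}
    {Θ₁ Θ₂ : List (RClause n k)} {rv rc : ℕ → ℕ}
    (h₁ : RValidIn D cI₁ pI Θ₁) (h₂ : RValidIn D cI₂ pI Θ₂) (hrc : Function.Injective rc)
    (hdisj : ∀ c ∈ ruleConsts Θ₂, rc c ∉ ruleConsts Θ₁) :
    RConsistent (Θ₁ ++ renClauses rv rc Θ₂) := by
  obtain ⟨cI, hcI₁, hcI₂⟩ := Function.exists_eqOn_and_eqOn_comp hrc cI₁ cI₂ hdisj
  exact ((h₁.congr_consts hcI₁).append (h₂.congr_consts hcI₂).renClauses).rConsistent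

end RuleSemantics

theorem exists_rValidIn_of_eCanValid {n k : ℕ} {E : Set (Fin n → Bool)}
    {Θ₁ Θ₂ : List (RClause n k)} (hE : E.Nonempty) (h₁ : ECanValid E Θ₁)
    (h₂ : ECanValid E Θ₂) :
    ∃ (D : Type) (_ : Nonempty D) (pI : Fin n → (Fin k → D) → Bool) (cI₁ cI₂ : ℕ → D),
      RValidIn D cI₁ pI Θ₁ ∧ RValidIn D cI₂ pI Θ₂ := by
  rcases h₁ with ⟨rfl, s₁, hE₁, hv₁⟩ | ⟨rfl, cI₁, hv₁⟩ <;>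
    rcases h₂ with ⟨hk, s₂, hE₂, hv₂⟩ | ⟨hk, cI₂, hv₂⟩
  · obtain rfl : s₁ = s₂ := Set.singleton_eq_singleton_iff.mp (hE₁ ▸ hE₂)
    exact ⟨PUnit, inferInstance, _, _, _, hv₁, hv₂⟩
  · exact absurd hk zero_ne_one
  · exact absurd hk one_ne_zero
  · exact ⟨_, hE.to_subtype, _, _, _, hv₁, hv₂⟩

theorem coherent_MG_well_defined_general {σ : Sig} (G : CanCalc σ)
    (hcoh : Coherent G) :
    ¬ ∃ (q : σ.Quant) (Θ₁ Θ₂ : List (RClause (σ.qn q) (σ.qk q)))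
        (E : Set (Fin (σ.qn q) → Bool)),
      E.Nonempty ∧ Rule.mk q true Θ₁ ∈ G ∧ Rule.mk q false Θ₂ ∈ G ∧
      ECanValid E Θ₁ ∧ ECanValid E Θ₂ := by
  rintro ⟨q, Θ₁, Θ₂, E, hE, hR₁, hR₂, hV₁, hV₂⟩
  obtain ⟨D, _, pI, cI₁, cI₂, h₁, h₂⟩ := exists_rValidIn_of_eCanValid hE hV₁ hV₂
  obtain ⟨rv, rc, hren⟩ := exists_goodRen Θ₁ Θ₂
  exact hcoh q Θ₁ Θ₂ hR₁ hR₂ rv rc hren <|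
    rConsistent_append_renClauses h₁ h₂ hren.2.1 hren.rc_not_mem_ruleConsts

/-- If a canonical calculus `G` is coherent, then the
Nmatrix `M_G` is well-defined: there is no quantifier `Q` (of arity `(n,k)`,
`k ∈ {0,1}`), nonempty set `E ∈ P⁺({t,f}ⁿ)`, and pair of dual rules
`Θ₁/⇒A`, `Θ₂/A⇒` of `G` such that both `Θ₁` and `Θ₂` are valid in some
`E`-canonical structure. -/
theorem coherent_MG_well_defined {σ : Sig} (G : CanCalc σ) (hk : KAtMostOne G)
    (hcoh : Coherent G) :
    ¬ ∃ (q : σ.Quant) (Θ₁ Θ₂ : List (RClause (σ.qn q) (σ.qk q)))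
        (E : Set (Fin (σ.qn q) → Bool)),
      E.Nonempty ∧ Rule.mk q true Θ₁ ∈ G ∧ Rule.mk q false Θ₂ ∈ G ∧
      ECanValid E Θ₁ ∧ ECanValid E Θ₂ :=
  coherent_MG_well_defined_general G hcoh
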